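/- arXiv:1810.10935 — 2 statements merged into one kernel-verified Lean document; each statement's English description precedes it below -/
import Mathlib

section
/- For every real number z > 1, the function x ↦ ∑_{n=1}^∞ cos(n x)/n^z is strictly decreasing on the interval [0, π]. -/
/-!
Since `Γ(z) / n ^ z = ∫₀^∞ t ^ (z - 1) e^(-n t) dt`, summing over `n` gives
`Γ(z) (C_z(x) - C_z(y)) = ∫₀^∞ t ^ (z - 1) (Q(e^(-t), cos x) - Q(e^(-t), cos y)) dt` with
`Q(r, cos w) = ∑_{n ≥ 1} r ^ n cos (n w) = (r cos w - r²) / (1 - 2 r cos w + r²)`,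
i.e. `(P_r(w) - 1) / 2` for the Poisson kernel `P_r`. For `0 < r < 1` this is strictly increasing
in `cos w ≤ 1`, and `cos` is strictly decreasing on `[0, π]`, so the integrand is positive when
`x < y`. Exchanging sum and integral needs `∑ 1 / n ^ z < ∞`, which is where `z > 1` enters.
-/

open Real MeasureTheory Set

theorem MeasureTheory.integrable_tsum_of_summable_integral_norm {α E ι : Type*}
    [MeasurableSpace α] {μ : Measure α} [NormedAddCommGroup E] [CompleteSpace E]
    [SecondCountableTopology E] [MeasurableSpace E] [BorelSpace E] [Countable ι]
    {F : ι → α → E} (hF_int : ∀ i, Integrable (F i) μ)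
    (hF_sum : Summable fun i ↦ ∫ a, ‖F i a‖ ∂μ) :
    Integrable (fun a ↦ ∑' i, F i a) μ := by
  refine ⟨(AEMeasurable.tsum fun i ↦ (hF_int i).aemeasurable).aestronglyMeasurable, ?_⟩
  calc ∫⁻ a, ‖∑' i, F i a‖ₑ ∂μ ≤ ∫⁻ a, ∑' i, ‖F i a‖ₑ ∂μ :=
        lintegral_mono fun _ ↦ enorm_tsum_le_tsum_enorm
    _ = ∑' i, ENNReal.ofReal (∫ a, ‖F i a‖ ∂μ) := by
        rw [lintegral_tsum fun i ↦ (hF_int i).aestronglyMeasurable.enorm]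
        simp_rw [ofReal_integral_norm_eq_lintegral_enorm (hF_int _)]
    _ < ⊤ := by
        rw [← ENNReal.ofReal_tsum_of_nonneg (fun i ↦ integral_nonneg fun _ ↦ norm_nonneg _) hF_sum]
        exact ENNReal.ofReal_lt_top

theorem MeasureTheory.setIntegral_pos_of_forall_pos {α : Type*} [MeasurableSpace α]
    {μ : Measure α} {s : Set α} {f : α → ℝ} (hs : MeasurableSet s) (hμs : μ s ≠ 0)
    (hf : IntegrableOn f s μ) (hpos : ∀ x ∈ s, 0 < f x) : 0 < ∫ x in s, f x ∂μ := by
  rw [setIntegral_pos_iff_support_of_nonneg_ae (ae_restrict_of_forall_mem hs fun x hx ↦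
    (hpos x hx).le) hf, inter_eq_right.2 fun x hx ↦ Function.mem_support.2 (hpos x hx).ne']
  exact pos_iff_ne_zero.2 hμs

theorem summable_div_nat_add_one_rpow {b : ℕ → ℝ} {C z : ℝ} (hz : 1 < z)
    (hb : ∀ n, |b n| ≤ C) : Summable fun n : ℕ ↦ b n / ((n : ℝ) + 1) ^ z := by
  have h : Summable fun n : ℕ ↦ 1 / ((n : ℝ) + 1) ^ z := by
    simpa using (summable_nat_add_iff 1).2 (summable_one_div_nat_rpow.2 hz)
  refine (h.mul_left C).of_norm_bounded fun n ↦ ?_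
  have hpos : 0 < ((n : ℝ) + 1) ^ z := by positivity
  rw [norm_div, Real.norm_of_nonneg hpos.le, mul_one_div]
  exact div_le_div_of_nonneg_right (hb n) hpos.le

section MellinDirichlet

variable {ι : Type*} {a p : ι → ℝ} {s : ℝ}

theorem integrableOn_rpow_mul_exp_neg_mul_Ioi {q : ℝ} (hs : 0 < s) (hq : 0 < q) :
    IntegrableOn (fun t ↦ t ^ (s - 1) * exp (-(q * t))) (Ioi 0) :=
  Integrable.of_integral_ne_zero (by rw [integral_rpow_mul_exp_neg_mul_Ioi hs hq]; positivity)

theorem summable_integral_norm_mul_rpow_mul_exp (hs : 0 < s) (hp : ∀ i, 0 < p i)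
    (ha : Summable fun i ↦ |a i| / p i ^ s) :
    Summable fun i ↦ ∫ t in Ioi 0, ‖a i * (t ^ (s - 1) * exp (-(p i * t)))‖ := by
  refine (ha.mul_left (Gamma s)).congr fun i ↦ ?_
  have hnorm : ∀ t ∈ Ioi (0 : ℝ), ‖a i * (t ^ (s - 1) * exp (-(p i * t)))‖ =
      |a i| * (t ^ (s - 1) * exp (-(p i * t))) := fun t ht ↦ by
    rw [norm_mul, Real.norm_eq_abs, Real.norm_of_nonneg (by have := ht.out.le; positivity)]
  rw [setIntegral_congr_fun measurableSet_Ioi hnorm, integral_const_mul,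
    integral_rpow_mul_exp_neg_mul_Ioi hs (hp i), one_div, inv_rpow (hp i).le]
  ring

theorem integrableOn_rpow_mul_tsum_mul_exp [Countable ι] (hs : 0 < s) (hp : ∀ i, 0 < p i)
    (ha : Summable fun i ↦ |a i| / p i ^ s) :
    IntegrableOn (fun t ↦ t ^ (s - 1) * ∑' i, a i * exp (-(p i * t))) (Ioi 0) := by
  simp_rw [← tsum_mul_left, mul_left_comm _ (a _)]
  exact integrable_tsum_of_summable_integral_norm
    (fun i ↦ (integrableOn_rpow_mul_exp_neg_mul_Ioi hs (hp i)).const_mul (a i))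
    (summable_integral_norm_mul_rpow_mul_exp hs hp ha)

theorem integral_rpow_mul_tsum_mul_exp [Countable ι] (hs : 0 < s) (hp : ∀ i, 0 < p i)
    (ha : Summable fun i ↦ |a i| / p i ^ s) :
    ∫ t in Ioi 0, t ^ (s - 1) * ∑' i, a i * exp (-(p i * t)) =
      Gamma s * ∑' i, a i / p i ^ s := by
  simp_rw [← tsum_mul_left, mul_left_comm _ (a _)]
  rw [← integral_tsum_of_summable_integral_norm
    (fun i ↦ (integrableOn_rpow_mul_exp_neg_mul_Ioi hs (hp i)).const_mul (a i))
    (summable_integral_norm_mul_rpow_mul_exp hs hp ha)]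
  congr 1 with i
  rw [integral_const_mul, integral_rpow_mul_exp_neg_mul_Ioi hs (hp i), one_div,
    inv_rpow (hp i).le]
  ring

end MellinDirichlet

theorem hasSum_pow_mul_cos {r : ℝ} (hr : |r| < 1) (w : ℝ) :
    HasSum (fun n : ℕ ↦ r ^ (n + 1) * cos ((n + 1) * w))
      ((r * cos w - r ^ 2) / (1 - 2 * r * cos w + r ^ 2)) := by
  set q : ℂ := r * Complex.exp (w * Complex.I)
  have hq : ‖q‖ < 1 := by
    rwa [norm_mul, Complex.norm_exp_ofReal_mul_I, mul_one, Complex.norm_real, Real.norm_eq_abs]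
  have hsum : HasSum (fun n : ℕ ↦ (q ^ (n + 1)).re) (q / (1 - q)).re := by
    simpa [pow_succ', div_eq_mul_inv] using
      ((hasSum_geometric_of_norm_lt_one hq).mul_left q).mapL Complex.reCLM
  have hterm (n : ℕ) : (q ^ (n + 1)).re = r ^ (n + 1) * cos ((n + 1) * w) := by
    rw [mul_pow, ← Complex.exp_nat_mul, ← Complex.ofReal_pow, Complex.re_ofReal_mul]
    push_cast
    rw [← mul_assoc, ← Complex.ofReal_natCast, ← Complex.ofReal_one, ← Complex.ofReal_add,
      ← Complex.ofReal_mul, Complex.exp_ofReal_mul_I_re]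
  have hre : q.re = r * cos w := by simp [q, Complex.exp_ofReal_mul_I_re]
  have him : q.im = r * sin w := by simp [q, Complex.exp_ofReal_mul_I_im]
  have hden : Complex.normSq (1 - q) = 1 - 2 * r * cos w + r ^ 2 := by
    rw [Complex.normSq_apply, Complex.sub_re, Complex.sub_im, Complex.one_re, Complex.one_im,
      hre, him]
    linear_combination (r ^ 2) * sin_sq_add_cos_sq w
  have hval : (q / (1 - q)).re = (r * cos w - r ^ 2) / (1 - 2 * r * cos w + r ^ 2) := by
    rw [Complex.div_re, hden, ← add_div, Complex.sub_re, Complex.sub_im, Complex.one_re,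
      Complex.one_im, hre, him]
    congr 1
    linear_combination (-r ^ 2) * sin_sq_add_cos_sq w
  simpa only [hterm, hval] using hsum

theorem strictMonoOn_poissonKernel {r : ℝ} (hr₀ : 0 < r) (hr₁ : r < 1) :
    StrictMonoOn (fun c ↦ (r * c - r ^ 2) / (1 - 2 * r * c + r ^ 2)) (Iic 1) := by
  intro c₁ hc₁ c₂ hc₂ hlt
  have hden (c : ℝ) (hc : c ≤ 1) : 0 < 1 - 2 * r * c + r ^ 2 := by nlinarith
  rw [div_lt_div_iff₀ (hden c₁ hc₁) (hden c₂ hc₂)]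
  -- the cross-multiplied difference is `r (1 - r²) (c₂ - c₁)`
  nlinarith [mul_pos (mul_pos hr₀ (by nlinarith : 0 < 1 - r ^ 2)) (sub_pos.2 hlt)]

theorem tsum_cos_sub_cos_mul_exp_pos {x y t : ℝ} (hx : x ∈ Icc 0 π) (hy : y ∈ Icc 0 π)
    (hxy : x < y) (ht : 0 < t) :
    0 < ∑' n : ℕ, (cos ((n + 1) * x) - cos ((n + 1) * y)) * exp (-((n + 1) * t)) := by
  set r := exp (-t)
  have hr₀ : 0 < r := exp_pos _
  have hr₁ : r < 1 := exp_lt_one_iff.2 (neg_lt_zero.2 ht)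
  have hexp (n : ℕ) : exp (-((n + 1) * t)) = r ^ (n + 1) := by
    rw [← exp_nat_mul]; push_cast; ring_nf
  have hr : |r| < 1 := by rwa [abs_of_pos hr₀]
  simp_rw [hexp, sub_mul, mul_comm _ (r ^ _)]
  rw [((hasSum_pow_mul_cos hr x).sub (hasSum_pow_mul_cos hr y)).tsum_eq, sub_pos]
  exact strictMonoOn_poissonKernel hr₀ hr₁ (cos_le_one y) (cos_le_one x)
    (strictAntiOn_cos hx hy hxy)

/-- For every real `z > 1`, the Clausen cosine function
`C_z(x) = ∑_{n≥1} cos(nx)/n^z` is strictly decreasing on `[0, π]`. -/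
theorem clausen_cos_strictAntiOn (z : ℝ) (hz : 1 < z) :
    StrictAntiOn (fun x : ℝ => ∑' n : ℕ, Real.cos (((n : ℝ) + 1) * x) / ((n : ℝ) + 1) ^ z)
      (Set.Icc 0 Real.pi) := by
  intro x hx y hy hxy
  have hz₀ : 0 < z := by linarith
  set a : ℕ → ℝ := fun n ↦ cos ((n + 1) * x) - cos ((n + 1) * y)
  have ha : Summable fun n : ℕ ↦ |a n| / ((n : ℝ) + 1) ^ z := by
    refine summable_div_nat_add_one_rpow (C := 2) hz fun n ↦ ?_
    have hcx := abs_cos_le_one ((n + 1) * x)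
    have hcy := abs_cos_le_one ((n + 1) * y)
    rw [abs_abs]
    exact (abs_sub _ _).trans (by linarith)
  have hp (n : ℕ) : (0 : ℝ) < n + 1 := by positivity
  have hpos : 0 < Gamma z * ∑' n : ℕ, a n / ((n : ℝ) + 1) ^ z := by
    rw [← integral_rpow_mul_tsum_mul_exp hz₀ hp ha]
    exact setIntegral_pos_of_forall_pos measurableSet_Ioi (by simp)
      (integrableOn_rpow_mul_tsum_mul_exp hz₀ hp ha)
      fun t ht ↦ mul_pos (rpow_pos_of_pos ht _) (tsum_cos_sub_cos_mul_exp_pos hx hy hxy ht)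
  have hcos (w : ℝ) : Summable fun n : ℕ ↦ cos ((n + 1) * w) / ((n : ℝ) + 1) ^ z :=
    summable_div_nat_add_one_rpow hz fun n ↦ abs_cos_le_one _
  simp_rw [a, sub_div, (hcos x).tsum_sub (hcos y)] at hpos
  exact sub_pos.1 (pos_of_mul_pos_right hpos (Gamma_pos_of_pos hz₀).le)
end

section
/- The improper integral ∫₀^1 (1/√(1−t) + 1/√(1+t) − 2) · t^{−5/2} dt converges and equals (2/3)·(√2 + 2). -/
/-!
With `r = √(1 - t)` and `s = √(1 + t)`, the integrand has the elementary primitive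
`F t = -(2/3) t^(-3/2) (r + s - 2) + (4/3) t^(-1/2) (s - r)`.
Both brackets vanish at `t = 0`; rationalizing them via
`(2 - r - s)(1 + r s)(2 + r + s) = 2 t²` and `(s - r)(s + r) = 2 t` rewrites `F` as a
function continuous on `[0, 1]` with value `0` at `0`. Since the integrand is nonnegative
(`1/r + 1/s ≥ 2` because `r s ≤ 1`), the fundamental theorem of calculus for a continuous
primitive with nonnegative derivative gives integrability and the value `F 1 - 0`.
-/

open Real MeasureTheory

noncomputable def cB1Integrand (t : ℝ) : ℝ :=
  (1 / √(1 - t) + 1 / √(1 + t) - 2) * t ^ (-(5 : ℝ) / 2)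

noncomputable def cB1Antideriv (t : ℝ) : ℝ :=
  -(2 / 3) * t ^ (-(3 : ℝ) / 2) * (√(1 - t) + √(1 + t) - 2)
    + 4 / 3 * t ^ (-(1 : ℝ) / 2) * (√(1 + t) - √(1 - t))

noncomputable def cB1AntiderivRationalized (t : ℝ) : ℝ :=
  4 / 3 * √t / ((1 + √(1 - t) * √(1 + t)) * (2 + √(1 - t) + √(1 + t)))
    + 8 / 3 * √t / (√(1 - t) + √(1 + t))

lemma two_sub_add_mul_eq_two_mul_sq {R : Type*} [CommRing R] {r s t : R}
    (hr : r ^ 2 = 1 - t) (hs : s ^ 2 = 1 + t) :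
    (2 - r - s) * ((1 + r * s) * (2 + r + s)) = 2 * t ^ 2 := by
  linear_combination (-(2 * (1 + t)) - (1 + r * s) - 2 * (s ^ 2 - (1 + t))) * hr
    + (-(2 * (1 - t)) - (1 + r * s)) * hs

lemma two_le_inv_add_inv {a b : ℝ} (ha : 0 < a) (hb : 0 < b) (hab : a * b ≤ 1) :
    2 ≤ a⁻¹ + b⁻¹ := by
  have hinv : 1 ≤ a⁻¹ * b⁻¹ := by
    rw [← mul_inv]
    exact one_le_inv_iff₀.2 ⟨by positivity, hab⟩
  nlinarith [sq_nonneg (a⁻¹ - b⁻¹), inv_pos.2 ha, inv_pos.2 hb]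

lemma cB1Integrand_nonneg {t : ℝ} (ht : t ∈ Set.Ioo (0 : ℝ) 1) : 0 ≤ cB1Integrand t := by
  obtain ⟨ht0, ht1⟩ := ht
  refine mul_nonneg ?_ (rpow_nonneg ht0.le _)
  have hprod : √(1 - t) * √(1 + t) ≤ 1 := by
    rw [← sqrt_mul (by linarith)]
    exact sqrt_le_one.2 (by nlinarith)
  have := two_le_inv_add_inv (sqrt_pos.2 (by linarith : 0 < 1 - t))
    (sqrt_pos.2 (by linarith : 0 < 1 + t)) hprod
  simp only [one_div]
  linarith

lemma hasDerivAt_cB1Antideriv {t : ℝ} (ht : t ∈ Set.Ioo (0 : ℝ) 1) :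
    HasDerivAt cB1Antideriv (cB1Integrand t) t := by
  obtain ⟨ht0, ht1⟩ := ht
  have hrpow (p : ℝ) : HasDerivAt (fun x : ℝ => x ^ p) (p * t ^ (p - 1)) t :=
    hasDerivAt_rpow_const (Or.inl ht0.ne')
  have hr' : HasDerivAt (fun x : ℝ => √(1 - x)) (-1 / (2 * √(1 - t))) t := by
    simpa using ((hasDerivAt_id t).const_sub 1).sqrt (by simp only [id]; linarith)
  have hs' : HasDerivAt (fun x : ℝ => √(1 + x)) (1 / (2 * √(1 + t))) t := by
    simpa using ((hasDerivAt_id t).const_add 1).sqrt (by simp only [id]; linarith)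
  have H : HasDerivAt cB1Antideriv _ t :=
    (((hrpow (-(3 : ℝ) / 2)).const_mul (-(2 / 3))).mul ((hr'.add hs').sub_const 2)).add
      (((hrpow (-(1 : ℝ) / 2)).const_mul (4 / 3)).mul (hs'.sub hr'))
  refine H.congr_deriv ?_
  have e3 : t ^ (-(3 : ℝ) / 2) = t * t ^ (-(5 : ℝ) / 2) := by
    rw [← rpow_one_add' ht0.le (by norm_num)]
    norm_num
  have e1 : t ^ (-(1 : ℝ) / 2) = t ^ 2 * t ^ (-(5 : ℝ) / 2) := by
    rw [← rpow_natCast, ← rpow_add ht0]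
    norm_num
  have hr : 0 < √(1 - t) := sqrt_pos.2 (by linarith)
  have hs : 0 < √(1 + t) := sqrt_pos.2 (by linarith)
  have hr2 : √(1 - t) ^ 2 = 1 - t := sq_sqrt (by linarith)
  have hs2 : √(1 + t) ^ 2 = 1 + t := sq_sqrt (by linarith)
  rw [cB1Integrand, Pi.add_apply, show -(3 : ℝ) / 2 - 1 = -(5 : ℝ) / 2 by norm_num,
    show -(1 : ℝ) / 2 - 1 = -(3 : ℝ) / 2 by norm_num, e3, e1]
  set r := √(1 - t)
  set s := √(1 + t)
  set u := t ^ (-(5 : ℝ) / 2)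
  field_simp
  linear_combination u * (6 * s + 4 * t * s) * hr2 + u * (6 * r - 4 * t * r) * hs2

lemma cB1Antideriv_eqOn_rationalized :
    Set.EqOn cB1Antideriv cB1AntiderivRationalized (Set.Ioc 0 1) := by
  rintro t ⟨ht0, ht1⟩
  have h3 : t ^ (-(3 : ℝ) / 2) * t ^ 2 = √t := by
    rw [sqrt_eq_rpow, ← rpow_natCast, ← rpow_add ht0]
    norm_num
  have h1 : t ^ (-(1 : ℝ) / 2) * t = √t := by
    rw [sqrt_eq_rpow, ← rpow_add_one ht0.ne']
    norm_num
  have hr2 : √(1 - t) ^ 2 = 1 - t := sq_sqrt (by linarith)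
  have hs2 : √(1 + t) ^ 2 = 1 + t := sq_sqrt (by linarith)
  have hs1 : 1 ≤ √(1 + t) := one_le_sqrt.2 (by linarith)
  set r := √(1 - t)
  set s := √(1 + t)
  have hD : 0 < (1 + r * s) * (2 + r + s) := by positivity
  have hrs : 0 < r + s := by positivity
  have hfirst : -(2 / 3) * t ^ (-(3 : ℝ) / 2) * (r + s - 2)
      = 4 / 3 * √t / ((1 + r * s) * (2 + r + s)) := by
    rw [eq_div_iff hD.ne', ← h3]
    linear_combination (2 / 3 * t ^ (-(3 : ℝ) / 2)) * two_sub_add_mul_eq_two_mul_sq hr2 hs2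
  have hsecond : 4 / 3 * t ^ (-(1 : ℝ) / 2) * (s - r) = 8 / 3 * √t / (r + s) := by
    rw [eq_div_iff hrs.ne', ← h1]
    linear_combination (4 / 3 * t ^ (-(1 : ℝ) / 2)) * (hs2 - hr2)
  rw [cB1Antideriv, cB1AntiderivRationalized, hfirst, hsecond]

lemma continuousOn_cB1AntiderivRationalized :
    ContinuousOn cB1AntiderivRationalized (Set.Icc 0 1) := by
  have hs1 (t : ℝ) (ht : t ∈ Set.Icc (0 : ℝ) 1) : 1 ≤ √(1 + t) :=
    one_le_sqrt.2 (by linarith [ht.1])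
  refine ContinuousOn.add (ContinuousOn.div (by fun_prop) (by fun_prop) fun t ht => ?_)
    (ContinuousOn.div (by fun_prop) (by fun_prop) fun t ht => ?_)
  · have := hs1 t ht
    positivity
  · have := hs1 t ht
    positivity

lemma hasDerivAt_cB1AntiderivRationalized {t : ℝ} (ht : t ∈ Set.Ioo (0 : ℝ) 1) :
    HasDerivAt cB1AntiderivRationalized (cB1Integrand t) t :=
  (hasDerivAt_cB1Antideriv ht).congr_of_eventuallyEq <|
    Filter.eventuallyEq_of_mem (Ioo_mem_nhds ht.1 ht.2) fun _ hx =>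
      (cB1Antideriv_eqOn_rationalized (Set.Ioo_subset_Ioc_self hx)).symm

lemma cB1AntiderivRationalized_one : cB1AntiderivRationalized 1 = 2 / 3 * (√2 + 2) := by
  rw [← cB1Antideriv_eqOn_rationalized (by norm_num : (1 : ℝ) ∈ Set.Ioc 0 1), cB1Antideriv,
    one_rpow, one_rpow, sub_self, sqrt_zero, one_add_one_eq_two]
  ring

lemma cB1AntiderivRationalized_zero : cB1AntiderivRationalized 0 = 0 := by
  simp [cB1AntiderivRationalized]

/-- The improper integral `∫₀¹ (1/√(1−t) + 1/√(1+t) − 2) t^{−5/2} dt`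
converges and equals `(2/3)(√2 + 2)`. -/
theorem integral_cB1 :
    IntegrableOn
      (fun t : ℝ => (1 / Real.sqrt (1 - t) + 1 / Real.sqrt (1 + t) - 2) * t ^ (-(5 : ℝ) / 2))
      (Set.Ioo 0 1) ∧
    (∫ t in Set.Ioo (0 : ℝ) 1,
        (1 / Real.sqrt (1 - t) + 1 / Real.sqrt (1 + t) - 2) * t ^ (-(5 : ℝ) / 2))
      = 2 / 3 * (Real.sqrt 2 + 2) := by
  have hint : IntegrableOn cB1Integrand (Set.Ioc 0 1) :=
    intervalIntegral.integrableOn_deriv_of_nonneg continuousOn_cB1AntiderivRationalized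
      (fun _ ht => hasDerivAt_cB1AntiderivRationalized ht) fun _ ht => cB1Integrand_nonneg ht
  refine ⟨hint.mono_set Set.Ioo_subset_Ioc_self, ?_⟩
  change ∫ t in Set.Ioo (0 : ℝ) 1, cB1Integrand t = _
  rw [← integral_Ioc_eq_integral_Ioo, ← intervalIntegral.integral_of_le zero_le_one,
    intervalIntegral.integral_eq_sub_of_hasDerivAt_of_le zero_le_one
      continuousOn_cB1AntiderivRationalized (fun _ ht => hasDerivAt_cB1AntiderivRationalized ht)
      ((intervalIntegrable_iff_integrableOn_Ioc_of_le zero_le_one).2 hint),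
    cB1AntiderivRationalized_one, cB1AntiderivRationalized_zero, sub_zero]
end
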